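/- arXiv:1707.09429 — 2 statements merged into one kernel-verified Lean document; each statement's English description precedes it below -/
import Mathlib

section
/- (Theorem 3.3(i)) Suppose Assumption AC holds: there exist sos polynomials a_0, a_1,…,a_r, b_1,…,b_t and a real number R > 0 such that R − ‖[x]_d‖² = a_0 + a_1 f_1 + ··· + a_r f_r + b_1 h_1 + ··· + b_t h_t identically, with deg(a_i f_i) ≤ 2d and deg(b_j h_j) ≤ 2d for all i, j. If C ∩ H = ∅ (the split feasibility problem is infeasible), then there exists k_0 such that for all k ≥ k_0 the order-k moment relaxation is infeasible, i.e., there is no y ∈ ℝ^{ℕ^n_{2k}} with y_0 = 1 such that L_1^{(k)}[y] ⪰ 0, L_{f_i}^{(k)}[y] ⪰ 0 for i = 1,…,r, and L_{h_j}^{(k)}[y] ⪰ 0 for j = 1,…,t. -/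
open MvPolynomial Finsupp

noncomputable section

/-- The total degree `|α|` of a multi-index `α ∈ ℕ^n`. -/
def mdeg {n : ℕ} (α : Fin n →₀ ℕ) : ℕ := ∑ i, α i

/-- `⌈m/2⌉` for a natural number `m`. -/
def halfCeil (m : ℕ) : ℕ := (m + 1) / 2

/-- The Riesz functional `R_y(f) = ∑_γ f_γ y_γ`. -/
def Riesz {n : ℕ} (y : (Fin n →₀ ℕ) → ℝ) (f : MvPolynomial (Fin n) ℝ) : ℝ :=
  ∑ γ ∈ f.support, f.coeff γ * y γ

/-- The `k`-th localizing matrix `L_f^{(k)}[y]`, indexed by multi-indices; its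
`(α,β)` entry is `∑_γ f_γ y_{α+β+γ}` when `|α|,|β| ≤ s := k - ⌈deg f / 2⌉` (and `0` otherwise). -/
def locMat {n : ℕ} (k : ℕ) (f : MvPolynomial (Fin n) ℝ) (y : (Fin n →₀ ℕ) → ℝ) :
    Matrix (Fin n →₀ ℕ) (Fin n →₀ ℕ) ℝ := fun α β =>
  if mdeg α ≤ k - halfCeil f.totalDegree ∧ mdeg β ≤ k - halfCeil f.totalDegree then
    ∑ γ ∈ f.support, f.coeff γ * y (α + β + γ)
  else 0

/-- Positive semidefiniteness of a (block-finitely supported) matrix indexed by multi-indices: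
symmetry together with nonnegativity of the quadratic form on all finitely supported vectors. -/
def IsPSD {n : ℕ} (M : Matrix (Fin n →₀ ℕ) (Fin n →₀ ℕ) ℝ) : Prop :=
  (∀ α β, M α β = M β α) ∧
  ∀ v : (Fin n →₀ ℕ) →₀ ℝ, 0 ≤ ∑ α ∈ v.support, ∑ β ∈ v.support, v α * M α β * v β

/-- The evaluation `u^α` of a monomial with multi-index `α` at a point `u`. -/
def monoEval {n : ℕ} (u : Fin n → ℝ) (α : Fin n →₀ ℕ) : ℝ := ∏ i, u i ^ α i

/-- The finite set of multi-indices `α ∈ ℕ^n` with `|α| ≤ D`. -/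
def degLE (n D : ℕ) : Finset (Fin n →₀ ℕ) :=
  (Finset.Iic (Finsupp.equivFunOnFinite.symm fun _ : Fin n => D)).filter fun α => mdeg α ≤ D

end

/-- A sum-of-squares (sos) polynomial. -/
def IsSos {n : ℕ} (σ : MvPolynomial (Fin n) ℝ) : Prop :=
  ∃ (L : ℕ) (p : Fin L → MvPolynomial (Fin n) ℝ), σ = ∑ l, p l ^ 2

/-- The polynomial `‖[x]_D‖² = ∑_{|β| ≤ D} x^{2β}`. -/
noncomputable def monVecSq (n D : ℕ) : MvPolynomial (Fin n) ℝ :=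
  ∑ β ∈ degLE n D, (MvPolynomial.monomial β (1 : ℝ)) ^ 2

/-!
Since `‖[x]_d‖² - xᵢ²` is sos for `d ≥ 1`, Assumption AC puts `R - xᵢ²` into the quadratic module
`Q` generated by the `fᵢ` and `hⱼ`, so `Q` is archimedean. If `-1 ∉ Q`, Zorn's lemma gives a maximal proper quadratic module `S ⊇ Q`; it is
archimedean with `S ∪ -S = ℝ[x]`, and then `p ↦ inf {λ | λ - p ∈ S}` is a ring homomorphism to `ℝ`,
i.e. evaluation at a point, and that point lies in `C ∩ H`. Infeasibility therefore yields a
certificate `-1 = σ₀ + ∑ σᵢ fᵢ + ∑ τⱼ hⱼ` with sos multipliers. Once `k` exceeds its degrees,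
positive semidefinite localizing matrices make the Riesz functional nonnegative on every term,
contradicting `L_y(-1) = -y₀ = -1`. (If `d = 0` all constraints are constants, one of them negative.)
-/

abbrev RPoly (n : ℕ) := MvPolynomial (Fin n) ℝ

section

variable {n : ℕ}

theorem isSos_zero : IsSos (0 : RPoly n) := ⟨0, fun _ => 0, by simp⟩

theorem isSos_sq (p : RPoly n) : IsSos (p ^ 2) := ⟨1, fun _ => p, by simp⟩

theorem isSos_one : IsSos (1 : RPoly n) := by simpa using isSos_sq (1 : RPoly n)

theorem isSos_C {c : ℝ} (hc : 0 ≤ c) : IsSos (C c : RPoly n) :=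
  ⟨1, fun _ => C √c, by rw [Fin.sum_univ_one, ← map_pow, Real.sq_sqrt hc]⟩

theorem IsSos.add {p q : RPoly n} (hp : IsSos p) (hq : IsSos q) : IsSos (p + q) := by
  obtain ⟨L, u, rfl⟩ := hp
  obtain ⟨L', v, rfl⟩ := hq
  exact ⟨L + L', Fin.append u v, by simp [Fin.sum_univ_add]⟩

theorem isSos_sum {κ : Type*} (s : Finset κ) {g : κ → RPoly n} (h : ∀ x ∈ s, IsSos (g x)) :
    IsSos (∑ x ∈ s, g x) := by
  classical
  induction s using Finset.induction_on with
  | empty => simpa using isSos_zero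
  | insert a s ha ih =>
    rw [Finset.sum_insert ha]
    exact (h a (Finset.mem_insert_self a s)).add (ih fun x hx => h x (Finset.mem_insert_of_mem hx))

theorem IsSos.mul {p q : RPoly n} (hp : IsSos p) (hq : IsSos q) : IsSos (p * q) := by
  obtain ⟨L, u, rfl⟩ := hp
  obtain ⟨L', v, rfl⟩ := hq
  simp_rw [Finset.sum_mul_sum, ← mul_pow]
  exact isSos_sum _ fun l _ => isSos_sum _ fun l' _ => isSos_sq _

structure IsQuadraticModule (S : Set (RPoly n)) : Prop where
  sos_mem : ∀ ⦃p⦄, IsSos p → p ∈ S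
  add_mem : ∀ ⦃a b⦄, a ∈ S → b ∈ S → a + b ∈ S
  sos_mul_mem : ∀ ⦃σ a⦄, IsSos σ → a ∈ S → σ * a ∈ S

def qmod {ι : Type*} [Fintype ι] (q : ι → RPoly n) : Set (RPoly n) :=
  {p | ∃ (σ₀ : RPoly n) (σ : ι → RPoly n),
    IsSos σ₀ ∧ (∀ i, IsSos (σ i)) ∧ p = σ₀ + ∑ i, σ i * q i}

theorem isQuadraticModule_qmod {ι : Type*} [Fintype ι] (q : ι → RPoly n) :
    IsQuadraticModule (qmod q) where
  sos_mem p hp := ⟨p, fun _ => 0, hp, fun _ => isSos_zero, by simp⟩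
  add_mem := by
    rintro _ _ ⟨σ₀, σ, hσ₀, hσ, rfl⟩ ⟨τ₀, τ, hτ₀, hτ, rfl⟩
    refine ⟨σ₀ + τ₀, σ + τ, hσ₀.add hτ₀, fun i => (hσ i).add (hτ i), ?_⟩
    simp only [Pi.add_apply, add_mul, Finset.sum_add_distrib]
    ring
  sos_mul_mem := by
    rintro ρ _ hρ ⟨σ₀, σ, hσ₀, hσ, rfl⟩
    refine ⟨ρ * σ₀, fun i => ρ * σ i, hρ.mul hσ₀, fun i => hρ.mul (hσ i), ?_⟩
    simp only [mul_add, Finset.mul_sum, mul_assoc]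

theorem mem_qmod {ι : Type*} [Fintype ι] [DecidableEq ι] (q : ι → RPoly n) (i : ι) :
    q i ∈ qmod q :=
  ⟨0, Pi.single i 1, isSos_zero,
    fun j => by by_cases hj : j = i <;> simp [hj, isSos_one, isSos_zero],
    by simp [Pi.single_apply]⟩

namespace IsQuadraticModule

variable {S : Set (RPoly n)} (hS : IsQuadraticModule S)
include hS

theorem C_add_mem {c : ℝ} (hc : 0 ≤ c) {a : RPoly n} (ha : a ∈ S) : C c + a ∈ S :=
  hS.add_mem (hS.sos_mem (isSos_C hc)) ha

theorem C_sub_mem_of_le {N N' : ℝ} {p : RPoly n} (h : C N - p ∈ S) (hN : N ≤ N') :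
    C N' - p ∈ S := by
  simpa [← add_sub_assoc, ← map_add] using hS.C_add_mem (sub_nonneg.2 hN) h

theorem neg_one_mem_of_C_mem {c : ℝ} (h : C c ∈ S) (hc : c < 0) : (-1 : RPoly n) ∈ S := by
  have := hS.sos_mul_mem (isSos_C (neg_nonneg.2 (inv_nonpos.2 hc.le))) h
  rwa [← map_mul, neg_mul, inv_mul_cancel₀ hc.ne, map_neg, map_one] at this

theorem adjoin (b : RPoly n) :
    IsQuadraticModule {x | ∃ s ∈ S, ∃ t, IsSos t ∧ x = s + t * b} where
  sos_mem p hp := ⟨p, hS.sos_mem hp, 0, isSos_zero, by ring⟩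
  add_mem := by
    rintro _ _ ⟨s, hs, t, ht, rfl⟩ ⟨s', hs', t', ht', rfl⟩
    exact ⟨s + s', hS.add_mem hs hs', t + t', ht.add ht', by ring⟩
  sos_mul_mem := by
    rintro σ _ hσ ⟨s, hs, t, ht, rfl⟩
    exact ⟨σ * s, hS.sos_mul_mem hσ hs, σ * t, hσ.mul ht, by ring⟩

theorem exists_C_sub_sq_mem_of_X_sq (hX : ∀ i, ∃ N : ℝ, C N - X i ^ 2 ∈ S) (p : RPoly n) :
    ∃ N : ℝ, C N - p ^ 2 ∈ S := by
  induction p using MvPolynomial.induction_on with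
  | C a => exact ⟨a ^ 2, by rw [map_pow, sub_self]; exact hS.sos_mem isSos_zero⟩
  | add p r hp hr =>
    obtain ⟨Np, hp⟩ := hp
    obtain ⟨Nr, hr⟩ := hr
    refine ⟨2 * Np + 2 * Nr, ?_⟩
    convert hS.add_mem (hS.add_mem (hS.sos_mul_mem (isSos_C zero_le_two) hp)
      (hS.sos_mul_mem (isSos_C zero_le_two) hr)) (hS.sos_mem (isSos_sq (p - r))) using 1
    simp only [map_add, map_mul, map_ofNat]
    ring
  | mul_X p i hp =>
    obtain ⟨Np, hp⟩ := hp
    obtain ⟨Ni, hi⟩ := hX i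
    have hi' := hS.C_sub_mem_of_le hi (le_max_left Ni 0)
    refine ⟨Np * max Ni 0, ?_⟩
    convert hS.add_mem (hS.sos_mul_mem (isSos_C (le_max_right Ni 0)) hp)
      (hS.sos_mul_mem (isSos_sq p) hi') using 1
    rw [map_mul]
    ring

theorem exists_C_sub_mem_of_X_sq (hX : ∀ i, ∃ N : ℝ, C N - X i ^ 2 ∈ S) (p : RPoly n) :
    ∃ N : ℝ, C N - p ∈ S := by
  obtain ⟨N, hN⟩ := hS.exists_C_sub_sq_mem_of_X_sq hX p
  refine ⟨(N + 1) / 2, ?_⟩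
  -- `(N + 1)/2 - p = ((N - p²) + (p - 1)²) / 2`
  convert hS.sos_mul_mem (isSos_C (by norm_num : (0 : ℝ) ≤ 1 / 2))
    (hS.add_mem hN (hS.sos_mem (isSos_sq (p - 1)))) using 1
  have h2 : C (1 / 2 : ℝ) * 2 = (1 : RPoly n) := by
    rw [← map_ofNat C 2, ← map_mul]; norm_num
  rw [show (N + 1) / 2 = 1 / 2 * (N + 1) by ring, map_mul, map_add, map_one]
  linear_combination p * h2

end IsQuadraticModule

structure IsProperArchimedean (S : Set (RPoly n)) : Prop extends IsQuadraticModule S where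
  neg_one_notMem : (-1 : RPoly n) ∉ S
  exists_C_sub_mem : ∀ p, ∃ N : ℝ, C N - p ∈ S

/-- `m(p) = inf {λ | λ - p ∈ S}`; for a maximal proper archimedean `S` this is the evaluation
at the point `(m(X₁), …, m(Xₙ))`. -/
noncomputable def sInfBound (S : Set (RPoly n)) (p : RPoly n) : ℝ :=
  sInf {l : ℝ | C l - p ∈ S}

namespace IsProperArchimedean

variable {S : Set (RPoly n)} (hS : IsProperArchimedean S)
include hS

theorem nonneg_of_C_mem {c : ℝ} (h : C c ∈ S) : 0 ≤ c :=
  not_lt.1 fun hc => hS.neg_one_notMem (hS.neg_one_mem_of_C_mem h hc)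

theorem exists_abs_bound (p : RPoly n) :
    ∃ N : ℝ, 0 ≤ N ∧ C N - p ∈ S ∧ C N + p ∈ S := by
  obtain ⟨N₁, h₁⟩ := hS.exists_C_sub_mem p
  obtain ⟨N₂, h₂⟩ := hS.exists_C_sub_mem (-p)
  refine ⟨max (max N₁ N₂) 0, le_max_right _ _, hS.C_sub_mem_of_le h₁ ?_, ?_⟩
  · exact (le_max_left _ _).trans (le_max_left _ _)
  · simpa using hS.C_sub_mem_of_le h₂ ((le_max_right N₁ N₂).trans (le_max_left _ _))

/-- Maximality makes `S ∪ -S` the whole ring: otherwise `-1 = s₁ + t₁ a = s₂ - t₂ a`, and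
combining these with `N ± a ∈ S` gives `-2 ∈ S`. -/
theorem mem_or_neg_mem_of_maximal
    (hmax : Maximal (fun T => IsQuadraticModule T ∧ (-1 : RPoly n) ∉ T) S) (a : RPoly n) :
    a ∈ S ∨ -a ∈ S := by
  have hext : ∀ b ∉ S, ∃ s ∈ S, ∃ t, IsSos t ∧ (-1 : RPoly n) = s + t * b := by
    intro b hb
    by_contra! hm1
    exact hb <| hmax.2 ⟨hS.adjoin b, fun ⟨s, hs, t, ht, he⟩ => hm1 s hs t ht he⟩
      (fun x hx => ⟨x, hx, 0, isSos_zero, by ring⟩)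
      ⟨0, hS.sos_mem isSos_zero, 1, isSos_one, by ring⟩
  by_contra! ⟨ha, hna⟩
  obtain ⟨s₁, hs₁, t₁, ht₁, e₁⟩ := hext a ha
  obtain ⟨s₂, hs₂, t₂, ht₂, e₂⟩ := hext (-a) hna
  obtain ⟨N, hN, hNa, hNa'⟩ := hS.exists_abs_bound a
  have hmem : t₁ * (C N + a) + s₁ + (t₂ * (C N - a) + s₂)
      + C N * (t₁ * s₂) + C N * (t₂ * s₁) ∈ S :=
    hS.add_mem (hS.add_mem (hS.add_mem (hS.add_mem (hS.sos_mul_mem ht₁ hNa') hs₁)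
      (hS.add_mem (hS.sos_mul_mem ht₂ hNa) hs₂))
      (hS.sos_mul_mem (isSos_C hN) (hS.sos_mul_mem ht₁ hs₂)))
      (hS.sos_mul_mem (isSos_C hN) (hS.sos_mul_mem ht₂ hs₁))
  have hsum : t₁ * (C N + a) + s₁ + (t₂ * (C N - a) + s₂)
      + C N * (t₁ * s₂) + C N * (t₂ * s₁) = C (-2) := by
    rw [map_neg, map_ofNat]
    linear_combination (-1 - C N * t₂) * e₁ + (-1 - C N * t₁) * e₂
  rw [hsum] at hmem
  exact absurd (hS.nonneg_of_C_mem hmem) (by norm_num)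

theorem sInfBound_le {p : RPoly n} {μ : ℝ} (h : C μ - p ∈ S) : sInfBound S p ≤ μ := by
  obtain ⟨N, hN⟩ := hS.exists_C_sub_mem (-p)
  refine csInf_le ⟨-N, fun l hl => ?_⟩ h
  have := hS.nonneg_of_C_mem (c := l + N) (by convert hS.add_mem hl hN using 1; simp)
  linarith

theorem le_sInfBound {p : RPoly n} {μ : ℝ} (h : p - C μ ∈ S) : μ ≤ sInfBound S p := by
  refine le_csInf (hS.exists_C_sub_mem p) fun l hl => ?_
  have := hS.nonneg_of_C_mem (c := l - μ) (by simpa using hS.add_mem hl h)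
  linarith

theorem sInfBound_nonneg {p : RPoly n} (hp : p ∈ S) : 0 ≤ sInfBound S p :=
  hS.le_sInfBound (by simpa using hp)

theorem C_add_sub_mem (p : RPoly n) {ε : ℝ} (hε : 0 < ε) :
    C (sInfBound S p + ε) - p ∈ S := by
  obtain ⟨l, hl, hlt⟩ := exists_lt_of_csInf_lt (hS.exists_C_sub_mem p)
    (lt_add_of_pos_right (sInfBound S p) hε)
  exact hS.C_sub_mem_of_le hl hlt.le

theorem sInfBound_eq {p : RPoly n} {c : ℝ} (h₁ : ∀ ε > 0, C (c + ε) - p ∈ S)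
    (h₂ : ∀ ε > 0, p - C (c - ε) ∈ S) : sInfBound S p = c := by
  refine le_antisymm (le_of_forall_pos_le_add fun ε hε => hS.sInfBound_le (h₁ ε hε)) ?_
  exact le_of_forall_pos_le_add fun ε hε => by linarith [hS.le_sInfBound (h₂ ε hε)]

theorem sInfBound_C (c : ℝ) : sInfBound S (C c) = c :=
  hS.sInfBound_eq (fun ε hε => by simpa using hS.sos_mem (isSos_C hε.le))
    (fun ε hε => by simpa using hS.sos_mem (isSos_C hε.le))

section Total

variable (htot : ∀ a, a ∈ S ∨ -a ∈ S)
include htot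

theorem sub_C_sub_mem (p : RPoly n) {ε : ℝ} (hε : 0 < ε) :
    p - C (sInfBound S p - ε) ∈ S := by
  refine (htot _).resolve_right fun h => ?_
  have := hS.sInfBound_le (by rwa [neg_sub] at h)
  linarith

theorem sInfBound_neg (p : RPoly n) :
    sInfBound S (-p) = -sInfBound S p :=
  hS.sInfBound_eq
    (fun ε hε => by simpa [sub_eq_add_neg, add_comm] using hS.sub_C_sub_mem htot p hε)
    (fun ε hε => by simpa [sub_eq_add_neg, add_comm] using hS.C_add_sub_mem p hε)

theorem sInfBound_add (p r : RPoly n) :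
    sInfBound S (p + r) = sInfBound S p + sInfBound S r := by
  refine hS.sInfBound_eq (fun ε hε => ?_) (fun ε hε => ?_)
  · convert hS.add_mem (hS.C_add_sub_mem p (half_pos hε)) (hS.C_add_sub_mem r (half_pos hε))
      using 1
    rw [show sInfBound S p + sInfBound S r + ε
      = sInfBound S p + ε / 2 + (sInfBound S r + ε / 2) by ring, map_add]
    ring
  · convert hS.add_mem (hS.sub_C_sub_mem htot p (half_pos hε))
      (hS.sub_C_sub_mem htot r (half_pos hε)) using 1
    rw [show sInfBound S p + sInfBound S r - ε
      = sInfBound S p - ε / 2 + (sInfBound S r - ε / 2) by ring, map_add]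
    ring

theorem sInfBound_C_mul (c : ℝ) (p : RPoly n) : sInfBound S (C c * p) = c * sInfBound S p := by
  have hpos : ∀ c > 0, ∀ p, sInfBound S (C c * p) = c * sInfBound S p := by
    intro c hc p
    refine hS.sInfBound_eq (fun ε hε => ?_) (fun ε hε => ?_)
    · convert hS.sos_mul_mem (isSos_C hc.le) (hS.C_add_sub_mem p (div_pos hε hc)) using 1
      rw [mul_sub, ← map_mul, mul_add, mul_div_cancel₀ _ hc.ne']
    · convert hS.sos_mul_mem (isSos_C hc.le) (hS.sub_C_sub_mem htot p (div_pos hε hc)) using 1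
      rw [mul_sub, ← map_mul, mul_sub, mul_div_cancel₀ _ hc.ne']
  rcases lt_trichotomy c 0 with hc | rfl | hc
  · rw [show C c * p = -(C (-c) * p) by rw [map_neg]; ring, hS.sInfBound_neg htot,
      hpos _ (neg_pos.2 hc)]
    ring
  · simpa using hS.sInfBound_C 0
  · exact hpos c hc p

theorem sInfBound_sub (p r : RPoly n) :
    sInfBound S (p - r) = sInfBound S p - sInfBound S r := by
  rw [sub_eq_add_neg, hS.sInfBound_add htot, hS.sInfBound_neg htot, sub_eq_add_neg]

theorem sInfBound_sq (p : RPoly n) : sInfBound S (p ^ 2) = sInfBound S p ^ 2 := by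
  set c := sInfBound S p
  set q := p - C c
  have hq : sInfBound S q = 0 := by rw [hS.sInfBound_sub htot, hS.sInfBound_C, sub_self]
  have hq2 : sInfBound S (q ^ 2) ≤ 0 := by
    refine le_of_forall_pos_le_add fun ε hε => ?_
    set δ := √ε
    have hδ : 0 < δ := Real.sqrt_pos.2 hε
    have hle : C δ - q ∈ S := by simpa [hq] using hS.C_add_sub_mem q hδ
    have hge : q + C δ ∈ S := by simpa [hq] using hS.sub_C_sub_mem htot q hδ
    -- `(δ + q)²(δ - q) + (δ - q)²(δ + q) = 2δ(δ² - q²)`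
    have hmem := hS.sos_mul_mem (isSos_C (inv_nonneg.2 (by positivity : (0 : ℝ) ≤ 2 * δ)))
      (hS.add_mem (hS.sos_mul_mem (isSos_sq (q + C δ)) hle)
        (hS.sos_mul_mem (isSos_sq (C δ - q)) hge))
    have hinv : C (2 * δ)⁻¹ * (2 * C δ) = (1 : RPoly n) := by
      rw [show (2 : RPoly n) * C δ = C (2 * δ) by rw [map_mul, map_ofNat], ← map_mul,
        inv_mul_cancel₀ (by positivity), map_one]
    refine hS.sInfBound_le ?_
    rw [zero_add, ← Real.sq_sqrt hε.le, map_pow]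
    convert hmem using 1
    linear_combination (q ^ 2 - C δ ^ 2) * hinv
  have hp : p ^ 2 = q ^ 2 + C (2 * c) * q + C (c ^ 2) := by
    simp only [q, map_mul, map_pow, map_ofNat]
    ring
  rw [hp, hS.sInfBound_add htot, hS.sInfBound_add htot, hS.sInfBound_C_mul htot, hS.sInfBound_C,
    le_antisymm hq2 (hS.sInfBound_nonneg (hS.sos_mem (isSos_sq q))), hq]
  ring

theorem sInfBound_mul (p r : RPoly n) :
    sInfBound S (p * r) = sInfBound S p * sInfBound S r := by
  have h := hS.sInfBound_C_mul htot 4 (p * r)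
  rw [show C 4 * (p * r) = (p + r) ^ 2 - (p - r) ^ 2 by rw [map_ofNat]; ring,
    hS.sInfBound_sub htot, hS.sInfBound_sq htot, hS.sInfBound_sq htot, hS.sInfBound_add htot,
    hS.sInfBound_sub htot] at h
  linarith

theorem sInfBound_eq_eval (p : RPoly n) :
    sInfBound S p = eval (fun i => sInfBound S (X i)) p := by
  induction p using MvPolynomial.induction_on with
  | C a => rw [hS.sInfBound_C, eval_C]
  | add p r hp hr => rw [hS.sInfBound_add htot, eval_add, hp, hr]
  | mul_X p i hp => rw [hS.sInfBound_mul htot, eval_mul, eval_X, hp]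

end Total

end IsProperArchimedean

theorem exists_maximal_proper_quadraticModule {S : Set (RPoly n)} (hS : IsQuadraticModule S)
    (h1 : (-1 : RPoly n) ∉ S) :
    ∃ M, S ⊆ M ∧ Maximal (fun T => IsQuadraticModule T ∧ (-1 : RPoly n) ∉ T) M := by
  refine zorn_subset_nonempty {T | IsQuadraticModule T ∧ (-1 : RPoly n) ∉ T}
    (fun c hc hch ⟨T₀, hT₀⟩ =>
      ⟨⋃₀ c, ⟨⟨?_, ?_, ?_⟩, ?_⟩, fun _ => Set.subset_sUnion_of_mem⟩)
    S ⟨hS, h1⟩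
  · exact fun p hp => ⟨T₀, hT₀, (hc hT₀).1.sos_mem hp⟩
  · rintro a b ⟨T₁, hT₁, ha⟩ ⟨T₂, hT₂, hb⟩
    rcases hch.total hT₁ hT₂ with h | h
    · exact ⟨T₂, hT₂, (hc hT₂).1.add_mem (h ha) hb⟩
    · exact ⟨T₁, hT₁, (hc hT₁).1.add_mem ha (h hb)⟩
  · rintro σ a hσ ⟨T, hT, ha⟩
    exact ⟨T, hT, (hc hT).1.sos_mul_mem hσ ha⟩
  · rintro ⟨T, hT, hm⟩
    exact (hc hT).2 hm

/-- Putinar's Positivstellensatz for an empty set, by Marshall's maximal-module argument. -/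
theorem neg_one_mem_qmod_of_archimedean {ι : Type*} [Fintype ι] (q : ι → RPoly n)
    (hX : ∀ i, ∃ N : ℝ, C N - X i ^ 2 ∈ qmod q) (hempty : ∀ x, ∃ i, eval x (q i) < 0) :
    (-1 : RPoly n) ∈ qmod q := by
  classical
  by_contra h1
  have hQ := isQuadraticModule_qmod q
  obtain ⟨S, hQS, hmax⟩ := exists_maximal_proper_quadraticModule hQ h1
  have hS : IsProperArchimedean S :=
    { hmax.1.1 with
      neg_one_notMem := hmax.1.2
      exists_C_sub_mem := fun p => (hQ.exists_C_sub_mem_of_X_sq hX p).imp fun _ h => hQS h }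
  have htot := hS.mem_or_neg_mem_of_maximal hmax
  obtain ⟨i, hi⟩ := hempty fun j => sInfBound S (X j)
  have := hS.sInfBound_nonneg (hQS (mem_qmod q i))
  rw [hS.sInfBound_eq_eval htot] at this
  linarith

section Riesz

variable (y : (Fin n →₀ ℕ) → ℝ)

theorem riesz_eq_sum (p : RPoly n) :
    Riesz y p = (AddMonoidAlgebra.coeff p).sum fun γ c => c * y γ := rfl

theorem riesz_add (p r : RPoly n) : Riesz y (p + r) = Riesz y p + Riesz y r := by
  simp only [riesz_eq_sum, AddMonoidAlgebra.coeff_add]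
  exact Finsupp.sum_add_index' (fun _ => zero_mul _) fun _ _ _ => add_mul _ _ _

theorem riesz_sum {κ : Type*} (s : Finset κ) (g : κ → RPoly n) :
    Riesz y (∑ x ∈ s, g x) = ∑ x ∈ s, Riesz y (g x) :=
  map_sum (AddMonoidHom.mk' (Riesz y) (riesz_add y)) g s

theorem riesz_monomial (α : Fin n →₀ ℕ) (c : ℝ) : Riesz y (monomial α c) = c * y α :=
  (riesz_eq_sum y _).trans (Finsupp.sum_single_index (zero_mul _))

theorem riesz_neg_one : Riesz y (-1 : RPoly n) = -y 0 := by
  rw [← map_one C, ← map_neg, C_apply, riesz_monomial, neg_one_mul]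

end Riesz

theorem mdeg_le_totalDegree {p : RPoly n} {α : Fin n →₀ ℕ} (h : α ∈ p.support) :
    mdeg α ≤ p.totalDegree := by
  simpa [mdeg, Finsupp.sum_fintype] using le_totalDegree h

theorem sq_mul_eq_sum (p q : RPoly n) :
    p ^ 2 * q = ∑ α ∈ p.support, ∑ β ∈ p.support, ∑ γ ∈ q.support,
      monomial (α + β + γ) (coeff α p * coeff β p * coeff γ q) := by
  conv_lhs => rw [sq, p.as_sum, q.as_sum]
  simp only [Finset.sum_mul, Finset.mul_sum, monomial_mul]
  rw [Finset.sum_comm]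
  simp_rw [Finset.sum_comm (s := q.support) (t := p.support)]
  rw [Finset.sum_comm]

theorem riesz_sq_mul_eq {k : ℕ} {p q : RPoly n} (y : (Fin n →₀ ℕ) → ℝ)
    (hdeg : ∀ α ∈ p.support, mdeg α ≤ k - halfCeil q.totalDegree) :
    Riesz y (p ^ 2 * q) =
      ∑ α ∈ p.support, ∑ β ∈ p.support, coeff α p * locMat k q y α β * coeff β p := by
  simp only [sq_mul_eq_sum, riesz_sum, riesz_monomial]
  refine Finset.sum_congr rfl fun α hα => Finset.sum_congr rfl fun β hβ => ?_
  rw [locMat, if_pos ⟨hdeg α hα, hdeg β hβ⟩, Finset.mul_sum, Finset.sum_mul]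
  exact Finset.sum_congr rfl fun γ _ => by ring

theorem riesz_sq_mul_nonneg {k : ℕ} {p q : RPoly n} {y : (Fin n →₀ ℕ) → ℝ}
    (hpsd : IsPSD (locMat k q y))
    (hdeg : ∀ α ∈ p.support, mdeg α ≤ k - halfCeil q.totalDegree) :
    0 ≤ Riesz y (p ^ 2 * q) :=
  riesz_sq_mul_eq y hdeg ▸ hpsd.2 (AddMonoidAlgebra.coeff p)

section Eventually

open Filter

theorem eventually_riesz_sq_mul_nonneg (p q : RPoly n) :
    ∀ᶠ k in atTop, ∀ y, IsPSD (locMat k q y) → 0 ≤ Riesz y (p ^ 2 * q) :=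
  eventually_atTop.2 ⟨halfCeil q.totalDegree + p.totalDegree, fun _ hk _ hpsd =>
    riesz_sq_mul_nonneg hpsd fun _ hα => by have := mdeg_le_totalDegree hα; omega⟩

theorem eventually_riesz_sos_mul_nonneg {σ : RPoly n} (hσ : IsSos σ) (q : RPoly n) :
    ∀ᶠ k in atTop, ∀ y, IsPSD (locMat k q y) → 0 ≤ Riesz y (σ * q) := by
  obtain ⟨L, P, rfl⟩ := hσ
  filter_upwards [eventually_all.2 fun l => eventually_riesz_sq_mul_nonneg (P l) q]
    with k hk y hpsd
  rw [Finset.sum_mul, riesz_sum]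
  exact Finset.sum_nonneg fun l _ => hk l y hpsd

theorem eventually_riesz_nonneg_of_mem_qmod {ι : Type*} [Fintype ι] {q : ι → RPoly n}
    {p : RPoly n} (hp : p ∈ qmod q) :
    ∀ᶠ k in atTop, ∀ y, IsPSD (locMat k 1 y) → (∀ i, IsPSD (locMat k (q i) y)) →
      0 ≤ Riesz y p := by
  obtain ⟨σ₀, σ, hσ₀, hσ, rfl⟩ := hp
  filter_upwards [eventually_riesz_sos_mul_nonneg hσ₀ 1,
    eventually_all.2 fun i => eventually_riesz_sos_mul_nonneg (hσ i) (q i)] with k h₀ h y h1 hq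
  rw [riesz_add, riesz_sum]
  exact add_nonneg (by simpa using h₀ y h1) (Finset.sum_nonneg fun i _ => h i y (hq i))

end Eventually

theorem single_one_mem_degLE {D : ℕ} (hD : 1 ≤ D) (i : Fin n) :
    Finsupp.single i 1 ∈ degLE n D := by
  refine Finset.mem_filter.2 ⟨Finset.mem_Iic.2 fun j => ?_, by simpa [mdeg] using hD⟩
  rw [Finsupp.single_apply]
  split_ifs <;> simp [hD]

theorem isSos_monVecSq_sub_X_sq {D : ℕ} (hD : 1 ≤ D) (i : Fin n) :
    IsSos (monVecSq n D - X i ^ 2) := by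
  rw [monVecSq, ← Finset.add_sum_erase _ _ (single_one_mem_degLE hD i), ← X,
    add_sub_cancel_left]
  exact isSos_sum _ fun β _ => isSos_sq _

theorem neg_one_mem_qmod_of_totalDegree_eq_zero {ι : Type*} [Fintype ι] {q : ι → RPoly n}
    {i : ι} (hdeg : (q i).totalDegree = 0) {x : Fin n → ℝ} (hx : eval x (q i) < 0) :
    (-1 : RPoly n) ∈ qmod q := by
  classical
  rw [totalDegree_eq_zero_iff_eq_C] at hdeg
  rw [hdeg, eval_C] at hx
  exact (isQuadraticModule_qmod q).neg_one_mem_of_C_mem (hdeg ▸ mem_qmod q i) hx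

end

theorem relaxation_infeasible_of_infeasible_general {n r t : ℕ}
    (f : Fin r → MvPolynomial (Fin n) ℝ)
    (h : Fin t → MvPolynomial (Fin n) ℝ)
    (C H : Set (Fin n → ℝ))
    (hC : C = {x | ∀ i, 0 ≤ MvPolynomial.eval x (f i)})
    (hH : H = {x | ∀ j, 0 ≤ MvPolynomial.eval x (h j)})
    (d : ℕ)
    (hd : d = max (Finset.univ.sup fun i => halfCeil (f i).totalDegree)
                  (Finset.univ.sup fun j => halfCeil (h j).totalDegree))
    -- Assumption AC:
    (Rv : ℝ)
    (a₀ : MvPolynomial (Fin n) ℝ) (a : Fin r → MvPolynomial (Fin n) ℝ)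
    (b : Fin t → MvPolynomial (Fin n) ℝ)
    (ha₀ : IsSos a₀) (ha : ∀ i, IsSos (a i)) (hb : ∀ j, IsSos (b j))
    (hcert : MvPolynomial.C Rv - monVecSq n d = a₀ + ∑ i, a i * f i + ∑ j, b j * h j)
    -- infeasibility of the SFP:
    (hinfeas : C ∩ H = ∅) :
    ∃ k₀ : ℕ, ∀ k, k₀ ≤ k →
      ¬ ∃ y : (Fin n →₀ ℕ) → ℝ, y 0 = 1 ∧
          IsPSD (locMat k (1 : MvPolynomial (Fin n) ℝ) y) ∧
          (∀ i, IsPSD (locMat k (f i) y)) ∧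
          (∀ j, IsPSD (locMat k (h j) y)) := by
  set q : Fin r ⊕ Fin t → RPoly n := Sum.elim f h
  have hempty : ∀ x, ∃ i, eval x (q i) < 0 := by
    intro x
    by_contra! hx
    have hx' : x ∈ C ∩ H := by
      rw [hC, hH]
      exact ⟨fun i => hx (.inl i), fun j => hx (.inr j)⟩
    exact Set.notMem_empty x (hinfeas ▸ hx')
  have hneg : (-1 : RPoly n) ∈ qmod q := by
    rcases Nat.eq_zero_or_pos d with hd0 | hd1
    · obtain ⟨i, hi⟩ := hempty 0
      have hdeg : halfCeil (q i).totalDegree ≤ d := by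
        rcases i with i | j <;> rw [hd]
        · exact le_max_of_le_left
            (Finset.le_sup (f := fun i => halfCeil (f i).totalDegree) (Finset.mem_univ i))
        · exact le_max_of_le_right
            (Finset.le_sup (f := fun j => halfCeil (h j).totalDegree) (Finset.mem_univ j))
      exact neg_one_mem_qmod_of_totalDegree_eq_zero (by rw [halfCeil] at hdeg; omega) hi
    · have hQ := isQuadraticModule_qmod q
      have hcertQ : MvPolynomial.C Rv - monVecSq n d ∈ qmod q :=
        ⟨a₀, Sum.elim a b, ha₀, Sum.rec ha hb, by simp [hcert, q, add_assoc]⟩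
      refine neg_one_mem_qmod_of_archimedean q (fun i => ⟨Rv, ?_⟩) hempty
      simpa using hQ.add_mem hcertQ (hQ.sos_mem (isSos_monVecSq_sub_X_sq hd1 i))
  obtain ⟨k₀, hk₀⟩ := Filter.eventually_atTop.1 (eventually_riesz_nonneg_of_mem_qmod hneg)
  refine ⟨k₀, fun k hk ⟨y, hy0, hpsd1, hpsdf, hpsdh⟩ => ?_⟩
  have := hk₀ k hk y hpsd1 (Sum.rec hpsdf hpsdh)
  rw [riesz_neg_one, hy0] at this
  linarith

/-- **Theorem 3.3(i).** Under Assumption AC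
(`R − ‖[x]_d‖² = a_0 + ∑ a_i f_i + ∑ b_j h_j` with sos multipliers and degree bounds),
if `C ∩ H = ∅`, then the order-`k` moment relaxation is infeasible for all `k` big enough. -/
theorem relaxation_infeasible_of_infeasible {n m r t : ℕ}
    (f : Fin r → MvPolynomial (Fin n) ℝ) (g : Fin t → MvPolynomial (Fin m) ℝ)
    (A : Matrix (Fin m) (Fin n) ℝ)
    (h : Fin t → MvPolynomial (Fin n) ℝ)
    (hh : ∀ j, h j = MvPolynomial.aeval
      (fun i : Fin m => ∑ l : Fin n, MvPolynomial.C (A i l) * MvPolynomial.X l) (g j))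
    (C H : Set (Fin n → ℝ))
    (hC : C = {x | ∀ i, 0 ≤ MvPolynomial.eval x (f i)})
    (hH : H = {x | ∀ j, 0 ≤ MvPolynomial.eval x (h j)})
    (d : ℕ)
    (hd : d = max (Finset.univ.sup fun i => halfCeil (f i).totalDegree)
                  (Finset.univ.sup fun j => halfCeil (h j).totalDegree))
    -- Assumption AC:
    (Rv : ℝ) (hR : 0 < Rv)
    (a₀ : MvPolynomial (Fin n) ℝ) (a : Fin r → MvPolynomial (Fin n) ℝ)
    (b : Fin t → MvPolynomial (Fin n) ℝ)
    (ha₀ : IsSos a₀) (ha : ∀ i, IsSos (a i)) (hb : ∀ j, IsSos (b j))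
    (hda : ∀ i, (a i * f i).totalDegree ≤ 2 * d)
    (hdb : ∀ j, (b j * h j).totalDegree ≤ 2 * d)
    (hcert : MvPolynomial.C Rv - monVecSq n d = a₀ + ∑ i, a i * f i + ∑ j, b j * h j)
    -- infeasibility of the SFP:
    (hinfeas : C ∩ H = ∅) :
    ∃ k₀ : ℕ, ∀ k, k₀ ≤ k →
      ¬ ∃ y : (Fin n →₀ ℕ) → ℝ, y 0 = 1 ∧
          IsPSD (locMat k (1 : MvPolynomial (Fin n) ℝ) y) ∧
          (∀ i, IsPSD (locMat k (f i) y)) ∧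
          (∀ j, IsPSD (locMat k (h j) y)) :=
  relaxation_infeasible_of_infeasible_general f h C H hC hH d hd Rv a₀ a b ha₀ ha hb hcert hinfeas
end

section
/- Suppose Assumption AC holds: there exist sos polynomials a_0, a_1,…,a_r, b_1,…,b_t and R > 0 with R − ‖[x]_d‖² = a_0 + ∑_i a_i f_i + ∑_j b_j h_j identically, deg(a_i f_i) ≤ 2d and deg(b_j h_j) ≤ 2d. Let k ≥ d and let y ∈ ℝ^{ℕ^n_{2k}} satisfy y_0 = 1, L_1^{(k)}[y] ⪰ 0, L_{f_i}^{(k)}[y] ⪰ 0 for all i, and L_{h_j}^{(k)}[y] ⪰ 0 for all j. Then ∑_{|β|≤d} y_{2β} ≤ R. -/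
open MvPolynomial Finsupp

/-! Applying the Riesz functional `L_y` to the certificate gives
`R - ∑_{|β|≤d} y_{2β} = L_y(a₀) + ∑ L_y(aᵢ fᵢ) + ∑ L_y(bⱼ hⱼ)`. For an sos `σ = ∑ pₗ²` and a
polynomial `F`, `L_y(pₗ² F)` is the quadratic form of the localizing matrix `L_F^{(k)}[y]` at the
coefficient vector of `pₗ`, hence nonnegative, provided `deg pₗ ≤ k - ⌈deg F / 2⌉`. Over `ℝ` the
leading forms of the `pₗ²` cannot cancel, so `deg σ = 2 maxₗ deg pₗ`, and over a domain
`deg (σ F) = deg σ + deg F`; the degree bound `deg (σ F) ≤ 2d ≤ 2k` therefore suffices. -/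

namespace MvPolynomial

variable {σ R : Type*}

theorem homogeneousComponent_add_mul [CommSemiring R] {p q : MvPolynomial σ R} {i j : ℕ}
    (hp : p.totalDegree ≤ i) (hq : q.totalDegree ≤ j) :
    homogeneousComponent (i + j) (p * q) =
      homogeneousComponent i p * homogeneousComponent j q := by
  classical
  ext γ
  by_cases hγ : γ.degree = i + j
  · rw [coeff_homogeneousComponent, if_pos hγ, coeff_mul, coeff_mul]
    refine Finset.sum_congr rfl fun x hx => ?_
    have hsum : x.1.degree + x.2.degree = i + j := by
      rw [← map_add, Finset.HasAntidiagonal.mem_antidiagonal.mp hx, hγ]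
    rw [coeff_homogeneousComponent, coeff_homogeneousComponent]
    rcases lt_trichotomy x.1.degree i with h1 | h1 | h1
    · rw [coeff_eq_zero_of_totalDegree_lt (f := q) (d := x.2) (by rw [← degree_apply]; omega)]
      simp
    · rw [if_pos h1, if_pos (by omega)]
    · rw [coeff_eq_zero_of_totalDegree_lt (f := p) (d := x.1) (by rw [← degree_apply]; omega)]
      simp
  · rw [coeff_homogeneousComponent, if_neg hγ,
      ((homogeneousComponent_isHomogeneous i p).mul
        (homogeneousComponent_isHomogeneous j q)).coeff_eq_zero hγ]

theorem homogeneousComponent_totalDegree_ne_zero [CommSemiring R] {p : MvPolynomial σ R}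
    (hp : p ≠ 0) : homogeneousComponent p.totalDegree p ≠ 0 := by
  obtain ⟨γ, hγ, hγdeg⟩ := Finset.exists_mem_eq_sup p.support (support_nonempty.mpr hp)
    fun s => s.sum fun _ e => e
  intro h0
  have := congrArg (coeff γ) h0
  rw [coeff_homogeneousComponent, if_pos (by rw [totalDegree, hγdeg]; rfl), coeff_zero] at this
  exact mem_support_iff.mp hγ this

section OrderedField

variable [Field R] [LinearOrder R] [IsStrictOrderedRing R]

theorem eq_zero_of_sum_sq_eq_zero {ι : Type*} {s : Finset ι} {p : ι → MvPolynomial σ R}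
    (h : ∑ i ∈ s, p i ^ 2 = 0) {l : ι} (hl : l ∈ s) : p l = 0 := by
  refine funext fun x => ?_
  have hx : ∑ i ∈ s, eval x (p i) ^ 2 = 0 := by simpa using congrArg (eval x) h
  simpa using (Finset.sum_eq_zero_iff_of_nonneg fun i _ => sq_nonneg _).mp hx l hl

theorem two_mul_totalDegree_le_totalDegree_sum_sq {ι : Type*} {s : Finset ι}
    (p : ι → MvPolynomial σ R) {l : ι} (hl : l ∈ s) :
    2 * (p l).totalDegree ≤ (∑ i ∈ s, p i ^ 2).totalDegree := by
  set D := s.sup fun i => (p i).totalDegree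
  obtain ⟨l₀, hl₀, hD⟩ := Finset.exists_mem_eq_sup s ⟨l, hl⟩ fun i => (p i).totalDegree
  have hlD : (p l).totalDegree ≤ D := Finset.le_sup (f := fun i => (p i).totalDegree) hl
  by_contra! hlt
  have htop : ∑ i ∈ s, homogeneousComponent D (p i) ^ 2 = 0 := by
    rw [← homogeneousComponent_eq_zero (D + D) (∑ i ∈ s, p i ^ 2) (by omega), map_sum]
    refine Finset.sum_congr rfl fun i hi => ?_
    have hiD : (p i).totalDegree ≤ D := Finset.le_sup (f := fun i => (p i).totalDegree) hi
    rw [sq, sq, homogeneousComponent_add_mul hiD hiD]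
  have hp₀ : p l₀ ≠ 0 := by
    rintro h0
    simp only [h0, totalDegree_zero] at hD
    omega
  exact homogeneousComponent_totalDegree_ne_zero hp₀ (hD ▸ eq_zero_of_sum_sq_eq_zero htop hl₀)

end OrderedField

end MvPolynomial

theorem mdeg_eq_degree {n : ℕ} (α : Fin n →₀ ℕ) : mdeg α = α.degree :=
  (degree_eq_sum α).symm

theorem totalDegree_monVecSq_le (n D : ℕ) : (monVecSq n D).totalDegree ≤ 2 * D := by
  refine (totalDegree_finsetSum _ _).trans (Finset.sup_le fun β hβ => ?_)
  have hβD : mdeg β ≤ D := (Finset.mem_filter.mp hβ).2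
  rw [monomial_pow, totalDegree_monomial _ (by norm_num)]
  change (2 • β).degree ≤ 2 * D
  rw [map_nsmul, ← mdeg_eq_degree, smul_eq_mul]
  omega

section Riesz

variable {n : ℕ} (y : (Fin n →₀ ℕ) → ℝ)

noncomputable def rieszLinearMap : MvPolynomial (Fin n) ℝ →ₗ[ℝ] ℝ :=
  linearCombination ℝ y ∘ₗ (AddMonoidAlgebra.coeffLinearEquiv ℝ).toLinearMap

theorem coe_rieszLinearMap : ⇑(rieszLinearMap y) = Riesz y := rfl

@[simp]
theorem Riesz_zero : Riesz y 0 = 0 := by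
  simp only [← coe_rieszLinearMap, map_zero]

theorem Riesz_add (f g : MvPolynomial (Fin n) ℝ) : Riesz y (f + g) = Riesz y f + Riesz y g := by
  simp only [← coe_rieszLinearMap, map_add]

theorem Riesz_sub (f g : MvPolynomial (Fin n) ℝ) : Riesz y (f - g) = Riesz y f - Riesz y g := by
  simp only [← coe_rieszLinearMap, map_sub]

theorem Riesz_sum {ι : Type*} (s : Finset ι) (F : ι → MvPolynomial (Fin n) ℝ) :
    Riesz y (∑ i ∈ s, F i) = ∑ i ∈ s, Riesz y (F i) := by
  simp only [← coe_rieszLinearMap, map_sum]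

theorem Riesz_monomial (γ : Fin n →₀ ℕ) (c : ℝ) : Riesz y (monomial γ c) = c * y γ := by
  rw [← coe_rieszLinearMap]
  exact (linearCombination_single ℝ c γ).trans (smul_eq_mul c (y γ))

theorem Riesz_mul_mul (p q F : MvPolynomial (Fin n) ℝ) :
    Riesz y (p * q * F) = ∑ α ∈ p.support, ∑ β ∈ q.support, ∑ γ ∈ F.support,
      p.coeff α * q.coeff β * F.coeff γ * y (α + β + γ) := by
  conv_lhs => rw [p.as_sum, q.as_sum, F.as_sum]
  simp only [Finset.sum_mul, Finset.mul_sum, monomial_mul, Riesz_sum, Riesz_monomial]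
  rw [Finset.sum_comm]
  refine (Finset.sum_congr rfl fun β _ => Finset.sum_comm).trans ?_
  rw [Finset.sum_comm]

theorem Riesz_sq_mul_eq {k : ℕ} (p F : MvPolynomial (Fin n) ℝ)
    (hp : p.totalDegree ≤ k - halfCeil F.totalDegree) :
    Riesz y (p ^ 2 * F) =
      ∑ α ∈ p.support, ∑ β ∈ p.support, p.coeff α * locMat k F y α β * p.coeff β := by
  have hmdeg {α} (hα : α ∈ p.support) : mdeg α ≤ k - halfCeil F.totalDegree :=
    (mdeg_eq_degree α).trans_le ((le_totalDegree hα).trans hp)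
  rw [sq, Riesz_mul_mul]
  refine Finset.sum_congr rfl fun α hα => Finset.sum_congr rfl fun β hβ => ?_
  rw [locMat, if_pos ⟨hmdeg hα, hmdeg hβ⟩, Finset.mul_sum, Finset.sum_mul]
  exact Finset.sum_congr rfl fun γ _ => by ring

theorem Riesz_sq_mul_nonneg {k : ℕ} {p F : MvPolynomial (Fin n) ℝ} (hF : IsPSD (locMat k F y))
    (hp : p.totalDegree ≤ k - halfCeil F.totalDegree) : 0 ≤ Riesz y (p ^ 2 * F) := by
  rw [Riesz_sq_mul_eq y p F hp]
  exact hF.2 (AddMonoidAlgebra.coeff p)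

theorem IsSos.Riesz_mul_nonneg {k : ℕ} {σ F : MvPolynomial (Fin n) ℝ} (hσ : IsSos σ)
    (hF : IsPSD (locMat k F y)) (hdeg : (σ * F).totalDegree ≤ 2 * k) :
    0 ≤ Riesz y (σ * F) := by
  obtain ⟨L, p, rfl⟩ := hσ
  rcases eq_or_ne F 0 with rfl | hF0
  · simp
  rcases eq_or_ne (∑ l, p l ^ 2) 0 with h0 | h0
  · simp [h0]
  rw [totalDegree_mul_of_isDomain h0 hF0] at hdeg
  rw [Finset.sum_mul, Riesz_sum]
  refine Finset.sum_nonneg fun l _ => Riesz_sq_mul_nonneg y hF ?_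
  have := two_mul_totalDegree_le_totalDegree_sum_sq p (Finset.mem_univ l)
  unfold halfCeil
  omega

theorem Riesz_C_sub_monVecSq (hy0 : y 0 = 1) (c : ℝ) (D : ℕ) :
    Riesz y (C c - monVecSq n D) = c - ∑ β ∈ degLE n D, y (β + β) := by
  simp only [monVecSq, Riesz_sub, Riesz_sum, C_apply, Riesz_monomial, hy0, sq, monomial_mul]
  simp

end Riesz

theorem moment_sum_bounded_of_AC_general {n r t : ℕ}
    (f : Fin r → MvPolynomial (Fin n) ℝ)
    (h : Fin t → MvPolynomial (Fin n) ℝ)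
    (d : ℕ)
    -- Assumption AC:
    (Rv : ℝ)
    (a₀ : MvPolynomial (Fin n) ℝ) (a : Fin r → MvPolynomial (Fin n) ℝ)
    (b : Fin t → MvPolynomial (Fin n) ℝ)
    (ha₀ : IsSos a₀) (ha : ∀ i, IsSos (a i)) (hb : ∀ j, IsSos (b j))
    (hda : ∀ i, (a i * f i).totalDegree ≤ 2 * d)
    (hdb : ∀ j, (b j * h j).totalDegree ≤ 2 * d)
    (hcert : MvPolynomial.C Rv - monVecSq n d = a₀ + ∑ i, a i * f i + ∑ j, b j * h j)
    -- a feasible point of the order-k moment relaxation: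
    (k : ℕ) (hk : d ≤ k) (y : (Fin n →₀ ℕ) → ℝ) (hy0 : y 0 = 1)
    (hmom : IsPSD (locMat k (1 : MvPolynomial (Fin n) ℝ) y))
    (hlf : ∀ i, IsPSD (locMat k (f i) y))
    (hlh : ∀ j, IsPSD (locMat k (h j) y)) :
    (∑ β ∈ degLE n d, y (β + β)) ≤ Rv := by
  have ha₀_deg : a₀.totalDegree ≤ 2 * d := by
    have ha₀_eq : a₀ = C Rv - monVecSq n d - ∑ i, a i * f i - ∑ j, b j * h j := by
      rw [hcert]; ring
    rw [← mem_restrictTotalDegree, ha₀_eq]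
    refine sub_mem (sub_mem (sub_mem ?_ ?_) (sum_mem fun i _ => ?_)) (sum_mem fun j _ => ?_)
    all_goals rw [mem_restrictTotalDegree]
    exacts [by simp, totalDegree_monVecSq_le n d, hda i, hdb j]
  have hRiesz := congrArg (Riesz y) hcert
  rw [Riesz_C_sub_monVecSq y hy0, Riesz_add, Riesz_add, Riesz_sum, Riesz_sum] at hRiesz
  have hL₀ := ha₀.Riesz_mul_nonneg y hmom (by rw [mul_one]; omega)
  have hLf := fun i => (ha i).Riesz_mul_nonneg y (hlf i) ((hda i).trans (by omega))
  have hLh := fun j => (hb j).Riesz_mul_nonneg y (hlh j) ((hdb j).trans (by omega))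
  rw [mul_one] at hL₀
  linarith [Finset.sum_nonneg fun i (_ : i ∈ Finset.univ) => hLf i,
    Finset.sum_nonneg fun j (_ : j ∈ Finset.univ) => hLh j]

/-- Under Assumption AC, for `k ≥ d` and any `y` feasible for the order-`k`
moment relaxation (`y_0 = 1` with moment and all localizing matrices PSD), one has
`∑_{|β|≤d} y_{2β} ≤ R`. -/
theorem moment_sum_bounded_of_AC {n m r t : ℕ}
    (f : Fin r → MvPolynomial (Fin n) ℝ) (g : Fin t → MvPolynomial (Fin m) ℝ)
    (A : Matrix (Fin m) (Fin n) ℝ)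
    (h : Fin t → MvPolynomial (Fin n) ℝ)
    (hh : ∀ j, h j = MvPolynomial.aeval
      (fun i : Fin m => ∑ l : Fin n, MvPolynomial.C (A i l) * MvPolynomial.X l) (g j))
    (d : ℕ)
    (hd : d = max (Finset.univ.sup fun i => halfCeil (f i).totalDegree)
                  (Finset.univ.sup fun j => halfCeil (h j).totalDegree))
    -- Assumption AC:
    (Rv : ℝ) (hR : 0 < Rv)
    (a₀ : MvPolynomial (Fin n) ℝ) (a : Fin r → MvPolynomial (Fin n) ℝ)
    (b : Fin t → MvPolynomial (Fin n) ℝ)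
    (ha₀ : IsSos a₀) (ha : ∀ i, IsSos (a i)) (hb : ∀ j, IsSos (b j))
    (hda : ∀ i, (a i * f i).totalDegree ≤ 2 * d)
    (hdb : ∀ j, (b j * h j).totalDegree ≤ 2 * d)
    (hcert : MvPolynomial.C Rv - monVecSq n d = a₀ + ∑ i, a i * f i + ∑ j, b j * h j)
    -- a feasible point of the order-k moment relaxation:
    (k : ℕ) (hk : d ≤ k) (y : (Fin n →₀ ℕ) → ℝ) (hy0 : y 0 = 1)
    (hmom : IsPSD (locMat k (1 : MvPolynomial (Fin n) ℝ) y))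
    (hlf : ∀ i, IsPSD (locMat k (f i) y))
    (hlh : ∀ j, IsPSD (locMat k (h j) y)) :
    (∑ β ∈ degLE n d, y (β + β)) ≤ Rv :=
  moment_sum_bounded_of_AC_general f h d Rv a₀ a b ha₀ ha hb hda hdb hcert k hk y hy0 hmom hlf hlh
end
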